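/- Let E = ℂ² with basis e₁, e₂, equipped with the dendriform algebra structure Dend₂¹ given by the bilinear operations ≺, ≻ determined on basis elements by e₁ ≺ e₁ = e₁ and e₁ ≻ e₂ = e₂ (all other products of basis elements are 0). A linear operator P : E → E is a Nijenhuis operator on (E, ≺, ≻) if and only if one of the following holds: (i) there exist a, d ∈ ℂ with P(e₁) = a·e₁ and P(e₂) = d·e₂; (ii) there exist b, d ∈ ℂ with P(e₁) = d·e₁ + b·e₂ and P(e₂) = d·e₂. -/

import Mathlib

/-!
Write `P e₁ = (a, b)` and `P e₂ = (c, d)`. Since `u ≺ v = (u₁ v₁, 0)` and `u ≻ v = (0, u₁ v₂)`, both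
Nijenhuis identities are polynomial identities in the coordinates of `u` and `v`. Testing the
identity for `≺` at `(e₂, e₂)` gives `c² = 0`, and at `(e₁, e₁)` gives `b (a - d) = 0`; conversely,
`c = 0` and `b (a - d) = 0` make both identities hold for all `u, v`, so the identity for `≻`
adds nothing. The two alternatives of the theorem are the cases `b = 0` and `a = d`.
-/

section Nijenhuis

variable {R M : Type*} [CommRing R] [AddCommGroup M] [Module R M]

def IsNijenhuis (μ : M →ₗ[R] M →ₗ[R] M) (P : M →ₗ[R] M) : Prop :=
  ∀ u v, μ (P u) (P v) = P (μ (P u) v + μ u (P v) - P (μ u v))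

end Nijenhuis

section Coordinates

variable {R M : Type*} [CommSemiring R] [AddCommMonoid M] [Module R M]

theorem Prod.eq_fst_smul_add_snd_smul (u : R × R) : u = u.1 • (1, 0) + u.2 • (0, 1) := by
  ext <;> simp

theorem LinearMap.apply_prod_eq (f : R × R →ₗ[R] M) (u : R × R) :
    f u = u.1 • f (1, 0) + u.2 • f (0, 1) := by
  conv_lhs => rw [u.eq_fst_smul_add_snd_smul]
  rw [map_add, map_smul, map_smul]

theorem LinearMap.apply₂_prod_eq (B : R × R →ₗ[R] R × R →ₗ[R] M) (u v : R × R) :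
    B u v = (u.1 * v.1) • B (1, 0) (1, 0) + (u.1 * v.2) • B (1, 0) (0, 1) +
      (u.2 * v.1) • B (0, 1) (1, 0) + (u.2 * v.2) • B (0, 1) (0, 1) := by
  rw [B.apply_prod_eq, LinearMap.add_apply, LinearMap.smul_apply, LinearMap.smul_apply,
    (B (1, 0)).apply_prod_eq v, (B (0, 1)).apply_prod_eq v]
  simp only [smul_add, smul_smul]
  abel

theorem LinearMap.apply_prod_eq_of_apply_eq {P : R × R →ₗ[R] R × R} {a b c d : R}
    (hP₁ : P (1, 0) = (a, b)) (hP₂ : P (0, 1) = (c, d)) (u : R × R) :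
    P u = (u.1 * a + u.2 * c, u.1 * b + u.2 * d) := by
  rw [P.apply_prod_eq, hP₁, hP₂]
  ext <;> simp

end Coordinates

section Dend21

variable {l r : ℂ × ℂ →ₗ[ℂ] ℂ × ℂ →ₗ[ℂ] ℂ × ℂ} {P : ℂ × ℂ →ₗ[ℂ] ℂ × ℂ} {a b c d : ℂ}

theorem dend21_left_apply (h11 : l (1, 0) (1, 0) = (1, 0)) (h12 : l (1, 0) (0, 1) = 0)
    (h21 : l (0, 1) (1, 0) = 0) (h22 : l (0, 1) (0, 1) = 0) (u v : ℂ × ℂ) :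
    l u v = (u.1 * v.1, 0) := by
  rw [l.apply₂_prod_eq, h11, h12, h21, h22]
  ext <;> simp

theorem dend21_right_apply (h11 : r (1, 0) (1, 0) = 0) (h12 : r (1, 0) (0, 1) = (0, 1))
    (h21 : r (0, 1) (1, 0) = 0) (h22 : r (0, 1) (0, 1) = 0) (u v : ℂ × ℂ) :
    r u v = (0, u.1 * v.2) := by
  rw [r.apply₂_prod_eq, h11, h12, h21, h22]
  ext <;> simp

theorem isNijenhuis_dend21Left_iff (hl : ∀ u v, l u v = (u.1 * v.1, 0))
    (hP₁ : P (1, 0) = (a, b)) (hP₂ : P (0, 1) = (c, d)) :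
    IsNijenhuis l P ↔ c = 0 ∧ b * (a - d) = 0 := by
  have hP := P.apply_prod_eq_of_apply_eq hP₁ hP₂
  constructor
  · intro h
    have hc : c = 0 := by simpa [hl, hP] using congrArg Prod.fst (h (0, 1) (0, 1))
    have hb := congrArg Prod.snd (h (1, 0) (1, 0))
    simp only [hl, hP, hc, Prod.mk_add_mk, Prod.mk_sub_mk] at hb
    exact ⟨hc, by linear_combination -hb⟩
  · rintro ⟨rfl, hbad⟩ u v
    simp only [hl, hP, Prod.ext_iff, Prod.mk_add_mk, Prod.mk_sub_mk, mul_zero, add_zero]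
    exact ⟨by ring, by linear_combination (-(u.1 * v.1)) * hbad⟩

theorem isNijenhuis_dend21Right (hr : ∀ u v, r u v = (0, u.1 * v.2))
    (hP₁ : P (1, 0) = (a, b)) (hP₂ : P (0, 1) = (0, d)) (hbad : b * (a - d) = 0) :
    IsNijenhuis r P := by
  have hP := P.apply_prod_eq_of_apply_eq hP₁ hP₂
  intro u v
  simp only [hr, hP, Prod.ext_iff, Prod.mk_add_mk, Prod.mk_sub_mk, mul_zero, add_zero]
  exact ⟨by ring, by linear_combination (u.1 * v.1) * hbad⟩

theorem dend21_nijenhuis_cases_iff :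
    ((∃ a' d' : ℂ, ((a, b) : ℂ × ℂ) = a' • (1, 0) ∧ ((c, d) : ℂ × ℂ) = d' • (0, 1)) ∨
      (∃ b' d' : ℂ, ((a, b) : ℂ × ℂ) = d' • (1, 0) + b' • (0, 1) ∧
        ((c, d) : ℂ × ℂ) = d' • (0, 1))) ↔
      c = 0 ∧ b * (a - d) = 0 := by
  simp only [Prod.smul_mk, smul_eq_mul, mul_one, mul_zero, Prod.ext_iff, Prod.mk_add_mk, add_zero,
    zero_add, exists_and_left, exists_and_right, exists_eq', exists_eq_right_right', and_true,
    true_and, mul_eq_zero, sub_eq_zero]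
  tauto

end Dend21

theorem stmt_3
    (l r : (ℂ × ℂ) →ₗ[ℂ] (ℂ × ℂ) →ₗ[ℂ] (ℂ × ℂ))
    (P : (ℂ × ℂ) →ₗ[ℂ] (ℂ × ℂ))
    (e₁ e₂ : ℂ × ℂ)
    (he₁ : e₁ = (1, 0)) (he₂ : e₂ = (0, 1))
    (hl11 : l e₁ e₁ = e₁)
    (hl12 : l e₁ e₂ = 0)
    (hl21 : l e₂ e₁ = 0)
    (hl22 : l e₂ e₂ = 0)
    (hr11 : r e₁ e₁ = 0)
    (hr12 : r e₁ e₂ = e₂)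
    (hr21 : r e₂ e₁ = 0)
    (hr22 : r e₂ e₂ = 0) :
    (∀ u v : ℂ × ℂ,
        l (P u) (P v) = P (l (P u) v + l u (P v) - P (l u v)) ∧
        r (P u) (P v) = P (r (P u) v + r u (P v) - P (r u v))) ↔
      ((∃ a d : ℂ, P e₁ = a • e₁ ∧ P e₂ = d • e₂) ∨ (∃ b d : ℂ, P e₁ = d • e₁ + b • e₂ ∧ P e₂ = d • e₂)) := by
  subst he₁ he₂
  have hl := dend21_left_apply hl11 hl12 hl21 hl22
  have hr := dend21_right_apply hr11 hr12 hr21 hr22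
  obtain ⟨⟨a, b⟩, hP₁⟩ : ∃ x, P (1, 0) = x := ⟨_, rfl⟩
  obtain ⟨⟨c, d⟩, hP₂⟩ : ∃ x, P (0, 1) = x := ⟨_, rfl⟩
  have hNl := isNijenhuis_dend21Left_iff hl hP₁ hP₂
  rw [hP₁, hP₂, dend21_nijenhuis_cases_iff, ← hNl]
  simp only [forall_and]
  refine ⟨And.left, fun h ↦ ⟨h, ?_⟩⟩
  obtain ⟨rfl, hbad⟩ := hNl.1 h
  exact isNijenhuis_dend21Right hr hP₁ hP₂ hbad
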